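/- arXiv:2006.06737 — 5 statements merged into one kernel-verified Lean document; each statement's English description precedes it below -/
import Mathlib

section
/- If d is an odd prime and 2d = φ(m) for some positive integer m (φ the Euler totient), then 2d + 1 is prime. -/
theorem stmt_2 (d : ℕ) (hd : d.Prime) (hodd : Odd d) (m : ℕ) (hm : 0 < m)
    (h : 2 * d = Nat.totient m) : (2 * d + 1).Prime := by
  by_cases hd3 : d = 3
  · subst hd3; norm_num
  by_contra hnp
  -- Step A: every odd prime dividing m equals 3
  have hA : ∀ p : ℕ, p.Prime → p ∣ m → p ≠ 2 → p = 3 := by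
    intro p hp hpm hp2
    have h1 : (p - 1) ∣ 2 * d := by
      have := Nat.totient_dvd_of_dvd hpm
      rw [Nat.totient_prime hp, ← h] at this
      exact this
    have hpodd : Odd p := hp.odd_of_ne_two hp2
    have hp3 : 3 ≤ p := by
      rcases hpodd with ⟨t, ht⟩
      have := hp.two_le
      omega
    by_cases hdp : d ∣ (p - 1)
    · obtain ⟨t, ht⟩ := hdp
      have htd : t ∣ 2 := by
        have hdt : d * t ∣ d * 2 := by
          rw [← ht, mul_comm d 2]; exact h1
        exact (Nat.mul_dvd_mul_iff_left hd.pos).mp hdt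
      rcases (Nat.prime_two).eq_one_or_self_of_dvd t htd with rfl | rfl
      · exfalso
        rcases hpodd with ⟨j, hj⟩
        rcases hodd with ⟨i, hi⟩
        omega
      · exfalso
        have hpe : 2 * d + 1 = p := by omega
        exact hnp (hpe ▸ hp)
    · have hcop : Nat.Coprime (p - 1) d :=
        (hd.coprime_iff_not_dvd.mpr hdp).symm
      have h2 : (p - 1) ∣ 2 := hcop.dvd_of_dvd_mul_right h1
      have := Nat.le_of_dvd (by norm_num) h2
      rcases hpodd with ⟨j, hj⟩
      omega
  -- Step B: 9 does not divide m
  have hB : ¬ (9 ∣ m) := by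
    intro h9
    have h6 : (6 : ℕ) ∣ 2 * d := by
      have := Nat.totient_dvd_of_dvd h9
      rw [← h] at this
      have h9t : Nat.totient 9 = 6 := by decide
      rwa [h9t] at this
    have h3 : (3 : ℕ) ∣ d := by
      have h32 : (3 : ℕ) ∣ 2 * d := dvd_trans (by norm_num) h6
      exact (Nat.Coprime.dvd_of_dvd_mul_left (by norm_num) h32)
    exact hd3 ((Nat.prime_dvd_prime_iff_eq Nat.prime_three hd).mp h3).symm
  obtain ⟨a, k, hk2, hmk⟩ := Nat.exists_eq_pow_mul_and_not_dvd hm.ne' 2 (by norm_num)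
  have hk13 : k = 1 ∨ k = 3 := by
    by_cases hk1 : k = 1
    · left; exact hk1
    right
    have hk0 : k ≠ 0 := by rintro rfl; exact hk2 (dvd_zero 2)
    obtain ⟨p, hp, hpk⟩ := Nat.exists_prime_and_dvd hk1
    have hp2 : p ≠ 2 := fun h2 => hk2 (h2 ▸ hpk)
    have hkm : k ∣ m := ⟨2 ^ a, by rw [hmk]; ring⟩
    have hp3 : p = 3 := hA p hp (hpk.trans hkm) hp2
    subst hp3
    obtain ⟨j, hj⟩ := hpk
    have hj1 : j = 1 := by
      by_contra hjne
      obtain ⟨q, hq, hqj⟩ := Nat.exists_prime_and_dvd hjne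
      have hqk : q ∣ k := hqj.trans ⟨3, by rw [hj]; ring⟩
      have hq2 : q ≠ 2 := fun h2 => hk2 (h2 ▸ hqk)
      have hq3 : q = 3 := hA q hq (hqk.trans hkm) hq2
      subst hq3
      obtain ⟨i, hi⟩ := hqj
      apply hB
      rw [hmk, hj, hi]
      exact ⟨2 ^ a * i, by ring⟩
    rw [hj, hj1, mul_one]
  have hcop : Nat.Coprime (2 ^ a) k := by
    apply Nat.Coprime.pow_left
    rcases hk13 with rfl | rfl <;> norm_num
  have htot : Nat.totient m = Nat.totient (2 ^ a) * Nat.totient k := by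
    rw [hmk, Nat.totient_mul hcop]
  have ht1 : Nat.totient (2 ^ a) ∣ 2 ^ a := by
    rcases Nat.eq_zero_or_pos a with rfl | ha
    · simp
    · rw [Nat.totient_prime_pow Nat.prime_two ha]
      simpa using pow_dvd_pow 2 (Nat.sub_le a 1)
  have ht2 : Nat.totient k ∣ 2 := by
    rcases hk13 with rfl | rfl <;> decide
  have hdvd : d ∣ 2 ^ (a + 1) := by
    have hdd : 2 * d ∣ 2 ^ a * 2 := by
      rw [h, htot]; exact mul_dvd_mul ht1 ht2
    have : d ∣ 2 ^ a * 2 := (dvd_mul_left d 2).trans hdd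
    rwa [← pow_succ] at this
  have hd2 : d ∣ 2 := hd.dvd_of_dvd_pow hdvd
  have := Nat.le_of_dvd (by norm_num) hd2
  have := hd.two_le
  rcases hodd with ⟨i, hi⟩
  omega
end

section
/- Let G be a compact topological group, F a field complete with respect to a discrete valuation (of characteristic 0) with valuation ring R, and ρ : G → GL_n(F) a continuous group homomorphism. Then there exists g ∈ GL_n(F) such that g ρ(x) g⁻¹ ∈ GL_n(R) for all x ∈ G. -/
open Multiplicative Matrix
open scoped WithZero

/-- The valuation subring of a field with a `ℤᵐ⁰`-valued valuation is a PID. -/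
theorem aux_pid {F : Type*} [Field F] (v : Valuation F ℤᵐ⁰) :
    IsPrincipalIdealRing v.valuationSubring := by
  constructor
  intro I
  by_cases hI : I = ⊥
  · exact hI ▸ ⟨0, (Ideal.span_zero).symm⟩
  · obtain ⟨a0, ha0I, ha0⟩ := Submodule.exists_mem_ne_zero_of_ne_bot hI
    have key : ∀ (a : v.valuationSubring), a ≠ 0 →
        ∃ k : ℤ, k ≤ 0 ∧ v (a : F) = ((ofAdd k : Multiplicative ℤ) : ℤᵐ⁰) := by
      intro a ha
      have h0 : v (a : F) ≠ 0 := by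
        simp only [ne_eq, Valuation.zero_iff]
        exact fun h => ha (Subtype.ext h)
      refine ⟨(WithZero.unzero h0).toAdd, ?_, (WithZero.coe_unzero h0).symm⟩
      have h1 : v (a : F) ≤ 1 := a.2
      rw [← WithZero.coe_unzero h0, ← WithZero.coe_one, WithZero.coe_le_coe] at h1
      have h2 := toAdd_le.mpr h1
      rw [toAdd_one] at h2
      exact h2
    set P : ℤ → Prop := fun k => ∃ a : v.valuationSubring,
      a ∈ I ∧ a ≠ 0 ∧ v (a : F) = ((ofAdd k : Multiplicative ℤ) : ℤᵐ⁰) with hP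
    have hex : ∃ k, P k := by
      obtain ⟨k, _, hk⟩ := key a0 ha0
      exact ⟨k, a0, ha0I, ha0, hk⟩
    have hbdd : ∃ b : ℤ, ∀ z : ℤ, P z → z ≤ b := by
      refine ⟨0, fun z hz => ?_⟩
      obtain ⟨a, _, ha, hva⟩ := hz
      obtain ⟨k, hk, hvk⟩ := key a ha
      rw [hva] at hvk
      have : z = k := by exact_mod_cast hvk
      omega
    obtain ⟨k, ⟨a, haI, ha, hva⟩, hmax⟩ := Int.exists_greatest_of_bdd hbdd hex
    refine ⟨a, le_antisymm ?_ ?_⟩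
    · intro b hb
      by_cases hb0 : b = 0
      · simp [hb0]
      · rw [Ideal.submodule_span_eq, Ideal.mem_span_singleton']
        have haF : (a : F) ≠ 0 := fun h => ha (Subtype.ext h)
        have hdiv : v ((b : F) / (a : F)) ≤ 1 := by
          obtain ⟨j, hj, hvj⟩ := key b hb0
          have hjk : j ≤ k := hmax j ⟨b, hb, hb0, hvj⟩
          rw [Valuation.map_div, hvj, hva, ← WithZero.coe_div, ← WithZero.coe_one,
            WithZero.coe_le_coe]
          rw [div_le_one']
          exact ofAdd_le.mpr hjk
        refine ⟨⟨(b : F) / (a : F), hdiv⟩, ?_⟩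
        ext
        push_cast
        field_simp
    · rw [Ideal.submodule_span_eq, Ideal.span_le, Set.singleton_subset_iff]
      exact haI

/-- A compact subset of a `ℤᵐ⁰`-valued field is bounded in valuation. -/
lemma aux_bdd_of_compact {F : Type*} [Field F] [Valued F ℤᵐ⁰] {K : Set F} (hK : IsCompact K) :
    ∃ M : ℤ, ∀ y ∈ K, Valued.v y ≤ ((ofAdd M : Multiplicative ℤ) : ℤᵐ⁰) := by
  set v : Valuation F ℤᵐ⁰ := Valued.v
  have hopen : ∀ m : ℤ,
      IsOpen (interior {y : F | v y < ((ofAdd m : Multiplicative ℤ) : ℤᵐ⁰)}) :=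
    fun m => isOpen_interior
  have hcover : K ⊆ ⋃ m : ℤ, interior {y : F | v y < ((ofAdd m : Multiplicative ℤ) : ℤᵐ⁰)} := by
    intro y _
    simp only [Set.mem_iUnion, mem_interior_iff_mem_nhds]
    rcases eq_or_ne (v y) 0 with h | h
    · have hy0 : y = 0 := by simpa [v] using h
      subst hy0
      refine ⟨0, Valued.mem_nhds_zero.mpr ⟨1, fun z hz => ?_⟩⟩
      have hz' := hz
      rw [Set.mem_setOf_eq, Valuation.restrict_lt_iff_lt_embedding] at hz'
      simp only [Set.mem_setOf_eq, Units.val_one, map_one] at hz' ⊢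
      simpa using hz'
    · refine ⟨(WithZero.unzero h).toAdd + 1, ?_⟩
      refine Filter.mem_of_superset (Valued.locally_const h) fun z hz => ?_
      simp only [Set.mem_setOf_eq] at hz ⊢
      rw [hz]
      conv_lhs => rw [← WithZero.coe_unzero h]
      rw [WithZero.coe_lt_coe, ← ofAdd_toAdd (WithZero.unzero h), ofAdd_lt]
      simp
  obtain ⟨t, ht⟩ := hK.elim_finite_subcover _ hopen hcover
  obtain ⟨M, hM⟩ := t.exists_le
  refine ⟨M, fun y hy => ?_⟩
  obtain ⟨m, hmt, hym⟩ := Set.mem_iUnion₂.mp (ht hy)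
  have hym' : v y < ((ofAdd m : Multiplicative ℤ) : ℤᵐ⁰) :=
    interior_subset (s := {y : F | v y < ((ofAdd m : Multiplicative ℤ) : ℤᵐ⁰)}) hym
  exact le_trans (le_of_lt hym') (by rw [WithZero.coe_le_coe, ofAdd_le]; exact hM m hmt)

set_option maxHeartbeats 2000000 in
set_option synthInstance.maxHeartbeats 200000 in
theorem stmt_4 (G : Type*) [Group G] [TopologicalSpace G] [IsTopologicalGroup G]
    [CompactSpace G] (F : Type*) [Field F] [Valued F (WithZero (Multiplicative ℤ))] [CompleteSpace F]
    [CharZero F] (n : ℕ) (ρ : G →* GL (Fin n) F)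
    (hρ : Continuous ρ) :
    ∃ g : GL (Fin n) F, ∀ x : G,
      (∀ i j, Valued.v (((g * ρ x * g⁻¹ : GL (Fin n) F) : Matrix (Fin n) (Fin n) F) i j) ≤ 1) ∧
      (∀ i j, Valued.v ((((g * ρ x * g⁻¹)⁻¹ : GL (Fin n) F) : Matrix (Fin n) (Fin n) F) i j) ≤ 1) := by
  classical
  set v : Valuation F ℤᵐ⁰ := Valued.v with hvdef
  by_cases htriv : ∀ y : F, v y ≤ 1
  · exact ⟨1, fun x => ⟨fun i j => htriv _, fun i j => htriv _⟩⟩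
  push_neg at htriv
  obtain ⟨π, hπ1⟩ := htriv
  have hπ0 : v π ≠ 0 := ne_of_gt (lt_trans zero_lt_one hπ1)
  have hπne : π ≠ 0 := fun h => hπ0 (by simp [h])
  -- bound on all matrix entries of ρ
  have hent : ∀ ij : Fin n × Fin n, ∃ M : ℤ, ∀ x : G,
      v (((ρ x : GL (Fin n) F) : Matrix (Fin n) (Fin n) F) ij.1 ij.2)
        ≤ ((ofAdd M : Multiplicative ℤ) : ℤᵐ⁰) := by
    intro ij
    have hc : Continuous fun x : G =>
        ((ρ x : GL (Fin n) F) : Matrix (Fin n) (Fin n) F) ij.1 ij.2 :=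
      (Units.continuous_val.comp hρ).matrix_elem ij.1 ij.2
    obtain ⟨M, hM⟩ := aux_bdd_of_compact (isCompact_range hc)
    exact ⟨M, fun x => hM _ (Set.mem_range_self x)⟩
  choose Mf hMf using hent
  obtain ⟨M₁, hM₁⟩ := Finite.exists_le Mf
  set B : ℤ := max M₁ 1 with hBdef
  have hB : ∀ (x : G) (i j : Fin n),
      v (((ρ x : GL (Fin n) F) : Matrix (Fin n) (Fin n) F) i j)
        ≤ ((ofAdd B : Multiplicative ℤ) : ℤᵐ⁰) := by
    intro x i j
    refine le_trans (hMf (i, j) x) ?_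
    rw [WithZero.coe_le_coe, ofAdd_le]
    exact le_trans (hM₁ (i, j)) (le_max_left _ _)
  -- an element c of large valuation
  set c : F := π ^ B.toNat with hcdef
  have hc0 : c ≠ 0 := pow_ne_zero _ hπne
  have hvc : ((ofAdd B : Multiplicative ℤ) : ℤᵐ⁰) ≤ v c := by
    have hvt : v π = ((WithZero.unzero hπ0 : Multiplicative ℤ) : ℤᵐ⁰) :=
      (WithZero.coe_unzero hπ0).symm
    have ht1 : (1 : ℤ) ≤ (WithZero.unzero hπ0).toAdd := by
      have : (1 : ℤᵐ⁰) < ((WithZero.unzero hπ0 : Multiplicative ℤ) : ℤᵐ⁰) := hvt ▸ hπ1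
      rw [← WithZero.coe_one, WithZero.coe_lt_coe] at this
      rw [← ofAdd_toAdd (WithZero.unzero hπ0), ← ofAdd_zero, ofAdd_lt] at this
      omega
    rw [hcdef, map_pow, hvt, ← WithZero.coe_pow, WithZero.coe_le_coe, ← ofAdd_toAdd
      ((WithZero.unzero hπ0) ^ B.toNat), ofAdd_le, toAdd_pow]
    calc B ≤ (B.toNat : ℤ) := Int.self_le_toNat B
    _ ≤ (B.toNat : ℤ) * (WithZero.unzero hπ0).toAdd :=
        le_mul_of_one_le_right (Int.ofNat_nonneg _) ht1
    _ = B.toNat • (WithZero.unzero hπ0).toAdd := by rw [nsmul_eq_mul]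
  have h1c : (1 : ℤᵐ⁰) ≤ v c := le_trans (by
    rw [← WithZero.coe_one, WithZero.coe_le_coe, ← ofAdd_zero, ofAdd_le]; omega) hvc
  -- the module theory
  set R := v.valuationSubring with hRdef
  haveI : IsPrincipalIdealRing R := aux_pid v
  haveI : NoZeroSMulDivisors R (Fin n → F) := by
    refine ⟨fun {r z} h => ?_⟩
    rw [← algebraMap_smul F r z, smul_eq_zero] at h
    rcases h with h | h
    · left
      exact Subtype.ext (by simpa using h)
    · right; exact h
  set Gset : Set (Fin n → F) :=
    (fun p : G × Fin n => ((ρ p.1 : GL (Fin n) F) : Matrix (Fin n) (Fin n) F) *ᵥ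
      Pi.single p.2 1) '' Set.univ with hGset
  set L : Submodule R (Fin n → F) := Submodule.span R Gset with hLdef
  have hsingle : ∀ i : Fin n, (Pi.single i 1 : Fin n → F) ∈ L := by
    intro i
    apply Submodule.subset_span
    exact ⟨(1, i), Set.mem_univ _, by show ((ρ 1 : GL (Fin n) F) : Matrix (Fin n) (Fin n) F) *ᵥ Pi.single i 1 = _; rw [_root_.map_one, Units.val_one, Matrix.one_mulVec]⟩
  have hstab : ∀ (x : G) (z : Fin n → F), z ∈ L →
      ((ρ x : GL (Fin n) F) : Matrix (Fin n) (Fin n) F) *ᵥ z ∈ L := by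
    intro x z hz
    induction hz using Submodule.span_induction with
    | mem y hy =>
        obtain ⟨⟨y', i⟩, -, rfl⟩ := hy
        apply Submodule.subset_span
        refine ⟨(x * y', i), Set.mem_univ _, ?_⟩
        show ((ρ (x * y') : GL (Fin n) F) : Matrix (Fin n) (Fin n) F) *ᵥ Pi.single i 1 = _
        rw [_root_.map_mul, Units.val_mul, ← Matrix.mulVec_mulVec]
    | zero => simp only [Matrix.mulVec_zero]; exact L.zero_mem
    | add a b _ _ ha hb => simp only [Matrix.mulVec_add]; exact L.add_mem ha hb
    | smul r a _ ha => 
        rw [← algebraMap_smul F r a, Matrix.mulVec_smul, algebraMap_smul F r]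
        exact L.smul_mem r ha
  -- the standard lattice
  set P0 : Submodule R (Fin n → F) :=
    Submodule.span R (Set.range fun i : Fin n => (Pi.single i 1 : Fin n → F)) with hP0
  have hPmem : ∀ z : Fin n → F, (∀ i, v (z i) ≤ 1) → z ∈ P0 := by
    intro z hz
    have hzeq : z = ∑ i : Fin n, (⟨z i, hz i⟩ : R) • (Pi.single i 1 : Fin n → F) := by
      funext j
      rw [Finset.sum_apply]
      have : ∀ i : Fin n, ((⟨z i, hz i⟩ : R) • (Pi.single i 1 : Fin n → F)) j
          = (Pi.single i (z i) : Fin n → F) j := by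
        intro i
        rw [Pi.smul_apply, ← algebraMap_smul F (⟨z i, hz i⟩ : R), smul_eq_mul]
        simp [Pi.single_apply]
      rw [Finset.sum_congr rfl fun i _ => this i, ← Finset.sum_apply,
        Finset.univ_sum_single]
    rw [hzeq]
    exact Submodule.sum_mem _ fun i _ =>
      Submodule.smul_mem _ _ (Submodule.subset_span (Set.mem_range_self i))
  -- scaling by c
  set ℓc : (Fin n → F) →ₗ[R] (Fin n → F) :=
    ((LinearMap.lsmul F (Fin n → F)) c).restrictScalars R with hℓc
  have hLcP : L ≤ P0.map ℓc := by
    rw [hLdef, Submodule.span_le]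
    rintro y ⟨⟨x, i⟩, -, rfl⟩
    refine ⟨c⁻¹ • (((ρ x : GL (Fin n) F) : Matrix (Fin n) (Fin n) F) *ᵥ Pi.single i 1),
      hPmem _ fun j => ?_, ?_⟩
    · rw [Pi.smul_apply, smul_eq_mul, Valuation.map_mul, map_inv₀]
      have hvcne : v c ≠ 0 := by
        simp only [ne_eq, Valuation.zero_iff]; exact hc0
      have hentry : v ((((ρ x : GL (Fin n) F) : Matrix (Fin n) (Fin n) F) *ᵥ
          Pi.single i 1) j) ≤ v c := by
        simp only [Matrix.mulVec_single_one, Matrix.col_apply]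
        exact le_trans (hB x j i) hvc
      calc (v c)⁻¹ * v ((((ρ x : GL (Fin n) F) : Matrix (Fin n) (Fin n) F) *ᵥ
            Pi.single i 1) j)
          ≤ (v c)⁻¹ * v c := mul_le_mul_right hentry _
        _ = 1 := inv_mul_cancel₀ hvcne
    · have happ : ∀ z : Fin n → F, ℓc z = c • z := fun z => rfl
      rw [happ, smul_smul, mul_inv_cancel₀ hc0, one_smul]
  -- L is finitely generated
  have hP0fg : P0.FG := Submodule.fg_span (Set.finite_range _)
  have hcPfg : (P0.map ℓc).FG := hP0fg.map ℓc
  haveI : Module.Finite R ↥(P0.map ℓc) := Module.Finite.iff_fg.mpr hcPfg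
  haveI : IsNoetherianRing R := PrincipalIdealRing.isNoetherianRing
  haveI : IsNoetherian R ↥(P0.map ℓc) := isNoetherian_of_isNoetherianRing_of_finite R _
  have hLfg : L.FG := by
    have h1 : (L.comap (P0.map ℓc).subtype).FG := IsNoetherian.noetherian _
    have h2 : L = Submodule.map (P0.map ℓc).subtype (L.comap (P0.map ℓc).subtype) := by
      rw [Submodule.map_comap_subtype]
      exact (inf_eq_right.mpr hLcP).symm
    rw [h2]
    exact h1.map _
  haveI : Module.Finite R ↥L := Module.Finite.iff_fg.mpr hLfg
  haveI : Module.Free R ↥L := Module.free_of_finite_type_torsion_free'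
  haveI hfint : Fintype (Module.Free.ChooseBasisIndex R ↥L) :=
    Module.Free.ChooseBasisIndex.fintype R ↥L
  set ι := Module.Free.ChooseBasisIndex R ↥L with hι
  set b : Module.Basis ι R ↥L := Module.Free.chooseBasis R ↥L with hb
  set w : ι → (Fin n → F) := fun k => ((b k : ↥L) : Fin n → F) with hw
  have hspanw : Submodule.span R (Set.range w) = L := by
    calc Submodule.span R (Set.range w)
        = Submodule.map L.subtype (Submodule.span R (Set.range ⇑b)) := by
          rw [Submodule.map_span]
          congr 1
          rw [← Set.range_comp]
          rfl
      _ = Submodule.map L.subtype ⊤ := by rw [b.span_eq]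
      _ = L := Submodule.map_subtype_top L
  have hliR : LinearIndependent R w := b.linearIndependent.map' L.subtype (L.ker_subtype)
  have hliF : LinearIndependent F w := (LinearIndependent.iff_fractionRing R F).mp hliR
  have hspanF : ⊤ ≤ Submodule.span F (Set.range w) := by
    rw [← (Pi.basisFun F (Fin n)).span_eq, Submodule.span_le]
    rintro _ ⟨i, rfl⟩
    have hiL : (Pi.single i 1 : Fin n → F) ∈ L := hsingle i
    rw [← hspanw] at hiL
    have := Submodule.span_le_restrictScalars R F (Set.range w)
    simpa [Pi.basisFun_apply] using this hiL
  set BF : Module.Basis ι F (Fin n → F) := Module.Basis.mk hliF hspanF with hBF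
  have hcard : Fintype.card ι = n := by
    have h1 := Module.finrank_eq_card_basis BF
    rw [Module.finrank_pi F] at h1
    simpa using h1.symm
  set σ : ι ≃ Fin n := Fintype.equivFinOfCardEq hcard with hσ
  set BB : Module.Basis (Fin n) F (Fin n → F) := BF.reindex σ with hBB
  -- coordinates of elements of L in the basis BB lie in R
  have hrepr : ∀ z : Fin n → F, z ∈ L → ∀ i : Fin n, v (BB.repr z i) ≤ 1 := by
    intro z hz i
    set z' : ↥L := ⟨z, hz⟩ with hz'
    have hz2 : z = ∑ k : ι, ((b.repr z' k : F)) • BF k := by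
      have h3 : ((∑ k : ι, b.repr z' k • b k : ↥L) : Fin n → F) = z := by rw [b.sum_repr z']
      rw [← h3]
      simp only [AddSubmonoidClass.coe_finset_sum, SetLike.val_smul]
      refine Finset.sum_congr rfl fun k _ => ?_
      rw [hBF, Module.Basis.mk_apply, hw,
        ← algebraMap_smul (A := F) (b.repr z' k) (((b k) : ↥L) : Fin n → F)]
      rfl
    have h5 : ⇑(BF.repr z) = fun k => ((b.repr z' k : F)) := by
      rw [hz2, BF.repr_sum_self]
    have h6 : BB.repr z i = BF.repr z (σ.symm i) := by
      rw [hBB, Module.Basis.repr_reindex_apply]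
    rw [h6, congrFun h5 (σ.symm i)]
    exact (b.repr z' (σ.symm i)).2
  -- the change of basis matrix
  set std : Module.Basis (Fin n) F (Fin n → F) := Pi.basisFun F (Fin n) with hstd
  set Q : Matrix (Fin n) (Fin n) F := std.toMatrix ⇑BB with hQ
  set Q' : Matrix (Fin n) (Fin n) F := BB.toMatrix ⇑std with hQ'
  have hQQ' : Q * Q' = 1 := Module.Basis.toMatrix_mul_toMatrix_flip std BB
  have hQ'Q : Q' * Q = 1 := Module.Basis.toMatrix_mul_toMatrix_flip BB std
  set u : GL (Fin n) F := ⟨Q, Q', hQQ', hQ'Q⟩ with hu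
  have hval : ∀ gl : GL (Fin n) F,
      ((u⁻¹ * gl * (u⁻¹)⁻¹ : GL (Fin n) F) : Matrix (Fin n) (Fin n) F)
        = Q' * (gl : Matrix (Fin n) (Fin n) F) * Q := by
    intro gl
    rw [inv_inv, Units.val_mul, Units.val_mul]
    rfl
  -- the key estimate
  have key : ∀ x : G, ∀ i j : Fin n,
      v (((u⁻¹ * ρ x * (u⁻¹)⁻¹ : GL (Fin n) F) : Matrix (Fin n) (Fin n) F) i j) ≤ 1 := by
    intro x i j
    rw [hval]
    have hmat : Q' * ((ρ x : GL (Fin n) F) : Matrix (Fin n) (Fin n) F) * Q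
        = LinearMap.toMatrix BB BB
          (Matrix.toLin' ((ρ x : GL (Fin n) F) : Matrix (Fin n) (Fin n) F)) := by
      rw [← basis_toMatrix_mul_linearMap_toMatrix_mul_basis_toMatrix (b := BB) (b' := std)
        (c := BB) (c' := std), LinearMap.toMatrix_eq_toMatrix', LinearMap.toMatrix'_toLin']
    rw [hmat, LinearMap.toMatrix_apply]
    have hBBj : (BB j : Fin n → F) ∈ L := by
      rw [← hspanw]
      apply Submodule.subset_span
      refine ⟨σ.symm j, ?_⟩
      rw [hBB, Module.Basis.reindex_apply, hBF, Module.Basis.mk_apply]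
    have hfz : Matrix.toLin' ((ρ x : GL (Fin n) F) : Matrix (Fin n) (Fin n) F) (BB j) ∈ L := by
      rw [Matrix.toLin'_apply]
      exact hstab x _ hBBj
    exact hrepr _ hfz i
  -- conclusion
  refine ⟨u⁻¹, fun x => ⟨key x, fun i j => ?_⟩⟩
  have hinv : (u⁻¹ * ρ x * (u⁻¹)⁻¹ : GL (Fin n) F)⁻¹ = u⁻¹ * ρ x⁻¹ * (u⁻¹)⁻¹ := by
    rw [map_inv]
    group
  rw [hinv]
  exact key x⁻¹ i j
end

section
/- Let G be a finite p-group with p odd, acting on a finite-dimensional vector space V over an algebraically closed field of characteristic 0, such that the character of V takes values in ℚ and V has no nonzero G-fixed vectors, with the action faithful. If V ≠ 0 then (p - 1) divides dim V. -/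
open Polynomial Module LinearMap Finset


private lemma multiset_card_finsum {α β : Type*} (s : Finset β) (f : β → Multiset α) :
    Multiset.card (∑ j ∈ s, f j) = ∑ j ∈ s, Multiset.card (f j) := by
  classical
  induction s using Finset.induction with
  | empty => simp
  | insert _ _ h ih => simp [Finset.sum_insert h, ih]

private lemma core_lemma (p : ℕ) (hp : p.Prime) {k : Type*} [Field k] [IsAlgClosed k]
    [CharZero k] {U : Type*} [AddCommGroup U] [Module k U] [FiniteDimensional k U]
    (f : Module.End k U) (hfp : f ^ p = 1) (hker : ∀ x : U, f x = x → x = 0)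
    (r : ℚ) (htr : LinearMap.trace k U f = (r : k)) :
    (p - 1) ∣ finrank k U := by
  classical
  haveI : Fact p.Prime := ⟨hp⟩
  haveI : NeZero p := ⟨hp.ne_zero⟩
  set d := finrank k U with hd
  rcases eq_or_ne d 0 with h0 | h0
  · simp [h0]
  let b := Module.finBasis k U
  set M := LinearMap.toMatrix b b f with hM
  set R := M.charpoly.roots with hR
  have hcard : Multiset.card R = d := by
    rw [hR, splits_iff_card_roots.mp (IsAlgClosed.splits _),
      Matrix.charpoly_natDegree_eq_dim, Fintype.card_fin]
  have htr' : R.sum = (r : k) := by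
    rw [hR, ← Matrix.trace_eq_sum_roots_charpoly, ← LinearMap.trace_eq_matrix_trace, htr]
  -- every root is an eigenvalue ≠ 1 with μ^p = 1
  have hroot : ∀ μ ∈ R, μ ^ p = 1 ∧ μ ≠ 1 := by
    intro μ hμ
    have hev : ∃ x : U, x ≠ 0 ∧ f x = μ • x := by
      have hisr : M.charpoly.IsRoot μ :=
        (Polynomial.mem_roots (M.charpoly_monic.ne_zero)).mp hμ
      have hdet : ((Matrix.scalar (Fin d)) μ - M).det = 0 := by
        have heval : Polynomial.eval μ M.charpoly = ((Matrix.scalar (Fin d)) μ - M).det := by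
          rw [Matrix.charpoly, eval_det, Matrix.matPolyEquiv_charmatrix]
          simp
          rfl
        rw [← heval]; exact hisr
      obtain ⟨v, hv0, hv⟩ := Matrix.exists_mulVec_eq_zero_iff.mpr hdet
      refine ⟨b.equivFun.symm v, fun h => hv0 (b.equivFun.symm.injective (by rw [h, map_zero])), ?_⟩
      have hrepr : ⇑(b.repr (b.equivFun.symm v)) = v := by
        have h := b.equivFun.apply_symm_apply v
        rwa [Basis.equivFun_apply] at h
      have h1 : M.mulVec v = μ • v := by
        have h2 := congrArg (· + M.mulVec v) hv
        have h3 : μ • v = M.mulVec v := by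
          simpa [Matrix.sub_mulVec, Matrix.smul_mulVec, Matrix.one_mulVec, sub_add_cancel]
            using h2
        exact h3.symm
      apply b.repr.injective
      ext i
      have := LinearMap.toMatrix_mulVec_repr b b f (b.equivFun.symm v)
      rw [hrepr] at this
      rw [← hM] at this
      calc (b.repr (f (b.equivFun.symm v))) i = M.mulVec v i := by rw [← this]
        _ = (μ • v) i := by rw [h1]
        _ = (b.repr (μ • b.equivFun.symm v)) i := by
            rw [map_smul, Finsupp.smul_apply, Pi.smul_apply, congrFun hrepr i]
    obtain ⟨x, hx0, hx⟩ := hev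
    have hpow : (f ^ p) x = μ ^ p • x :=
      Module.End.HasEigenvector.pow_apply ⟨Module.End.mem_eigenspace_iff.mpr hx, hx0⟩ p
    rw [hfp] at hpow
    have h1 : μ ^ p = 1 := by
      have : (μ ^ p - 1) • x = 0 := by
        rw [sub_smul, one_smul, ← hpow]; simp
      rcases smul_eq_zero.mp this with h | h
      · exact sub_eq_zero.mp h
      · exact absurd h hx0
    refine ⟨h1, fun hμ1 => ?_⟩
    rw [hμ1, one_smul] at hx
    exact hx0 (hker x hx)
  -- pick a primitive p-th root among the roots
  obtain ⟨ζ, hζR⟩ : ∃ ζ, ζ ∈ R := Multiset.exists_mem_of_ne_zero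
    (by intro h; rw [h] at hcard; simp at hcard; exact h0 hcard.symm)
  obtain ⟨hζp, hζ1⟩ := hroot ζ hζR
  have hord : orderOf ζ = p := by
    rcases (Nat.Prime.eq_one_or_self_of_dvd hp _ (orderOf_dvd_of_pow_eq_one hζp)) with h | h
    · exact absurd (orderOf_eq_one_iff.mp h) hζ1
    · exact h
  have hprim : IsPrimitiveRoot ζ p := hord ▸ IsPrimitiveRoot.orderOf ζ
  set a : ℕ → ℕ := fun j => Multiset.count (ζ ^ j) R with ha
  have hRdecomp : R = ∑ j ∈ Finset.Ico 1 p, Multiset.replicate (a j) (ζ ^ j) := by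
    ext x
    rw [Multiset.count_sum']
    by_cases hx : x ∈ R
    · obtain ⟨hxp, hx1⟩ := hroot x hx
      obtain ⟨j, hjp, hjx⟩ := hprim.eq_pow_of_pow_eq_one hxp
      have hj0 : j ≠ 0 := by rintro rfl; simp at hjx; exact hx1 hjx.symm
      have hjmem : j ∈ Finset.Ico 1 p := Finset.mem_Ico.mpr ⟨Nat.one_le_iff_ne_zero.mpr hj0, hjp⟩
      rw [Finset.sum_eq_single j]
      · rw [Multiset.count_replicate, if_pos hjx]
        show Multiset.count x R = Multiset.count (ζ ^ j) R
        rw [hjx]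
      · intro i hi hij
        rw [Multiset.count_replicate, if_neg]
        intro hxi
        exact hij (hprim.pow_inj (Finset.mem_Ico.mp hi).2 hjp (by rw [hxi, hjx]))
      · intro h; exact absurd hjmem h
    · rw [Multiset.count_eq_zero_of_notMem hx]
      symm
      apply Finset.sum_eq_zero
      intro i hi
      rw [Multiset.count_replicate]
      split
      · next h =>
          show Multiset.count (ζ ^ i) R = 0
          rw [h]; exact Multiset.count_eq_zero_of_notMem hx
      · rfl
  have hdsum : d = ∑ j ∈ Finset.Ico 1 p, a j := by
    rw [← hcard, hRdecomp, multiset_card_finsum]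
    simp [Multiset.card_replicate]
  have hsum : (∑ j ∈ Finset.Ico 1 p, (a j : k) * ζ ^ j) = (r : k) := by
    rw [← htr', hRdecomp, Multiset.sum_sum]
    apply Finset.sum_congr rfl
    intro j _
    rw [Multiset.sum_replicate, nsmul_eq_mul]
  -- the polynomial over ℚ
  set q : ℚ[X] := (∑ j ∈ Finset.Ico 1 p, C ((a j : ℚ)) * X ^ j) - C r with hq
  have haev : aeval ζ q = 0 := by
    rw [hq]
    rw [map_sub, map_sum]
    simp only [map_mul, aeval_C, aeval_X_pow]
    have : ∀ j, (algebraMap ℚ k) ((a j : ℚ)) = (a j : k) := by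
      intro j; push_cast; simp
    simp only [this]
    rw [hsum]
    have : (algebraMap ℚ k) r = (r : k) := by
      rw [eq_ratCast (algebraMap ℚ k) r]
    rw [this, sub_self]
  have hdvd : minpoly ℚ ζ ∣ q := minpoly.dvd ℚ ζ haev
  have hmin : minpoly ℚ ζ = cyclotomic p ℚ := (cyclotomic_eq_minpoly_rat hprim hp.pos).symm
  rw [hmin] at hdvd
  obtain ⟨c, hc⟩ := hdvd
  -- coefficients of q
  have hqcoeff : ∀ j ∈ Finset.Ico 1 p, q.coeff j = (a j : ℚ) := by
    intro j hj
    obtain ⟨hj1, hjp⟩ := Finset.mem_Ico.mp hj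
    rw [hq, coeff_sub, Polynomial.finset_sum_coeff]
    rw [coeff_C, if_neg (by omega), sub_zero]
    rw [Finset.sum_eq_single j]
    · simp
    · intro i hi hij
      rw [coeff_C_mul, coeff_X_pow, if_neg (Ne.symm hij), mul_zero]
    · intro h; exact absurd hj h
  have hdeg : q.natDegree ≤ p - 1 := by
    rw [hq]
    apply le_trans (natDegree_sub_le _ _)
    simp only [natDegree_C, max_le_iff]
    constructor
    · apply le_trans (Polynomial.natDegree_sum_le _ _)
      rw [Finset.fold_max_le]
      constructor
      · omega
      · intro j hj
        apply le_trans (natDegree_C_mul_le _ _)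
        rw [natDegree_X_pow]
        have := (Finset.mem_Ico.mp hj).2; omega
    · omega
  have key : ∀ j ∈ Finset.Ico 1 p, a j = a 1 := by
    have h1mem : (1 : ℕ) ∈ Finset.Ico 1 p := Finset.mem_Ico.mpr ⟨le_refl _, hp.one_lt⟩
    rcases eq_or_ne c 0 with hc0 | hc0
    · rw [hc0, mul_zero] at hc
      intro j hj
      have hj' := hqcoeff j hj
      have h1' := hqcoeff 1 h1mem
      rw [hc] at hj' h1'
      simp only [coeff_zero] at hj' h1'
      exact_mod_cast hj'.symm.trans h1'
    · have hcyc0 : cyclotomic p ℚ ≠ 0 := cyclotomic_ne_zero p ℚ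
      have hq0 : q ≠ 0 := by
        rw [hc]; exact mul_ne_zero hcyc0 hc0
      have hdegc : c.natDegree = 0 := by
        have := Polynomial.natDegree_mul hcyc0 hc0
        rw [← hc, natDegree_cyclotomic, Nat.totient_prime hp] at this
        have h2 := hp.two_le
        omega
      obtain hcC := Polynomial.eq_C_of_natDegree_eq_zero hdegc
      have hcoeff2 : ∀ j ∈ Finset.Ico 1 p, q.coeff j = c.coeff 0 := by
        intro j hj
        rw [hc, hcC, Polynomial.coeff_mul_C, cyclotomic_prime ℚ p]
        rw [Polynomial.finset_sum_coeff]
        rw [Finset.sum_eq_single j]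
        · simp
        · intro i hi hij; rw [coeff_X_pow, if_neg (Ne.symm hij)]
        · intro h
          exact absurd (Finset.mem_range.mpr (Finset.mem_Ico.mp hj).2) h
      intro j hj
      have := (hqcoeff j hj).symm.trans ((hcoeff2 j hj).trans (hcoeff2 1 h1mem).symm)
      rw [hqcoeff 1 h1mem] at this
      exact_mod_cast this
  rw [hdsum, Finset.sum_congr rfl key, Finset.sum_const, Nat.card_Ico]
  exact ⟨a 1, rfl⟩


section Helpers

variable {k G V : Type*} [CommSemiring k] [Monoid G] [AddCommMonoid V] [Module k V]

/-- Restriction of a representation to an invariant submodule. -/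
private def resRep (ρ : Representation k G V) (N : Submodule k V)
    (h : ∀ g : G, Set.MapsTo (ρ g) N N) : Representation k G ↥N where
  toFun g := (ρ g).restrict (h g)
  map_one' := by
    ext x
    simp [LinearMap.restrict_apply]
  map_mul' g₁ g₂ := by
    ext x
    simp [LinearMap.restrict_apply, map_mul, Module.End.mul_apply]
    rfl

@[simp] private lemma resRep_coe (ρ : Representation k G V) (N : Submodule k V)
    (h : ∀ g : G, Set.MapsTo (ρ g) N N) (g : G) (x : ↥N) :
    ((resRep ρ N h g) x : V) = ρ g (x : V) := rfl

end Helpers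

private lemma trace_restrict_add {k V : Type*} [Field k] [AddCommGroup V] [Module k V]
    [FiniteDimensional k V] {W U : Submodule k V} (h : IsCompl W U) (f : V →ₗ[k] V)
    (hW : Set.MapsTo f W W) (hU : Set.MapsTo f U U) :
    LinearMap.trace k V f =
      LinearMap.trace k ↥W (f.restrict hW) + LinearMap.trace k ↥U (f.restrict hU) := by
  classical
  set N : Fin 2 → Submodule k V := ![W, U] with hN
  have hint : DirectSum.IsInternal N := by
    rw [DirectSum.isInternal_submodule_iff_isCompl N (i := 0) (j := 1) (by decide)
      (by ext x; fin_cases x <;> simp)]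
    exact h
  have hf : ∀ i, Set.MapsTo f (N i) (N i) := by
    intro i; fin_cases i
    · exact hW
    · exact hU
  rw [LinearMap.trace_eq_sum_trace_restrict hint hf, Fin.sum_univ_two]
  rfl

private lemma aux_lemma (p : ℕ) (hp : p.Prime) : ∀ (n : ℕ),
    ∀ (G : Type*) [Group G] [Finite G], IsPGroup p G →
    ∀ (k : Type*) [Field k] [IsAlgClosed k] [CharZero k],
    ∀ (V : Type*) [AddCommGroup V] [Module k V] [FiniteDimensional k V],
    ∀ (ρ : Representation k G V), finrank k V = n →
    (∀ g : G, ∃ r : ℚ, LinearMap.trace k V (ρ g) = (r : k)) →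
    (∀ v : V, (∀ g : G, ρ g v = v) → v = 0) →
    (p - 1) ∣ n := by
  intro n
  induction n using Nat.strong_induction_on with
  | _ n ih =>
  intro G _ _ hG k _ _ _ V _ _ _ ρ hdim hrat hfix
  classical
  haveI : Fact p.Prime := ⟨hp⟩
  rcases subsingleton_or_nontrivial V with hV | hV
  · have h0 : n = 0 := by rw [← hdim]; exact finrank_zero_of_subsingleton
    simp [h0]
  -- find a central element of order p in the image
  have hnt : ∃ g : G, ρ g ≠ 1 := by
    by_contra hc
    push_neg at hc
    obtain ⟨v, hv⟩ := exists_ne (0 : V)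
    exact hv (hfix v fun g => by rw [hc g]; rfl)
  set φ : G →* (V →ₗ[k] V)ˣ := MonoidHom.toHomUnits ρ with hφ
  set Gb : Subgroup (V →ₗ[k] V)ˣ := φ.range with hGb
  haveI : Finite ↥Gb := Finite.of_surjective _ φ.rangeRestrict_surjective
  have hpGb : IsPGroup p ↥Gb := by
    intro x
    obtain ⟨g, hg⟩ := x.2
    obtain ⟨m, hm⟩ := hG g
    refine ⟨m, ?_⟩
    apply Subtype.ext
    push_cast
    rw [← hg, ← map_pow, hm, map_one]
  haveI : Nontrivial ↥Gb := by
    obtain ⟨g, hg⟩ := hnt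
    refine ⟨⟨⟨φ g, ⟨g, rfl⟩⟩, 1, fun hcon => hg ?_⟩⟩
    have h1 : φ g = 1 := Subtype.ext_iff.mp hcon
    have h2 := congrArg Units.val h1
    rw [MonoidHom.coe_toHomUnits] at h2
    simpa using h2
  haveI hcn : Nontrivial ↥(Subgroup.center ↥Gb) := hpGb.center_nontrivial
  obtain ⟨z, hz1⟩ := exists_ne (1 : ↥(Subgroup.center ↥Gb))
  set u : ↥Gb := z.1 with hu
  have hu_mem : u ∈ Subgroup.center ↥Gb := z.2
  have hune : u ≠ 1 := fun h => hz1 (Subtype.ext h)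
  obtain ⟨m, hm⟩ := (IsPGroup.iff_orderOf.mp hpGb) u
  have hm1 : 1 ≤ m := by
    by_contra h
    push_neg at h
    interval_cases m
    simp at hm
    exact hune hm
  set y : ↥Gb := u ^ (p ^ (m - 1)) with hy
  have hy1 : y ≠ 1 := by
    intro h
    have hdvd : orderOf u ∣ p ^ (m - 1) := orderOf_dvd_of_pow_eq_one h
    rw [hm] at hdvd
    have := (Nat.pow_dvd_pow_iff_le_right hp.one_lt).mp hdvd
    omega
  have hyp : y ^ p = 1 := by
    rw [hy, ← pow_mul]
    have : p ^ (m - 1) * p = p ^ m := by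
      rw [← pow_succ]
      congr 1
      omega
    rw [this, ← hm]
    exact pow_orderOf_eq_one u
  have hy_mem : y ∈ Subgroup.center ↥Gb := Subgroup.pow_mem _ hu_mem _
  obtain ⟨h₀, hh₀⟩ := y.2
  set f : Module.End k V := ρ h₀ with hfdef
  have hfval : ((y : (V →ₗ[k] V)ˣ) : V →ₗ[k] V) = f := by
    rw [← hh₀]
    exact MonoidHom.coe_toHomUnits ρ h₀
  have hf1 : f ≠ 1 := by
    intro h
    apply hy1
    apply Subtype.ext
    apply Units.ext
    rw [hfval, h]
    rfl
  have hfp : f ^ p = 1 := by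
    have h1 : ((y : (V →ₗ[k] V)ˣ)) ^ p = 1 := by
      have := congrArg (Subtype.val) hyp
      push_cast at this
      exact this
    have h2 := congrArg Units.val h1
    rw [Units.val_pow_eq_pow_val, hfval] at h2
    simpa using h2
  have hcomm : ∀ g : G, f * ρ g = ρ g * f := by
    intro g
    have h1 := (Subgroup.mem_center_iff.mp hy_mem) ⟨φ g, ⟨g, rfl⟩⟩
    have h2 : (φ g) * (y : (V →ₗ[k] V)ˣ) = (y : (V →ₗ[k] V)ˣ) * (φ g) :=
      Subtype.ext_iff.mp h1
    have h3 := congrArg Units.val h2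
    rw [Units.val_mul, Units.val_mul, hfval, MonoidHom.coe_toHomUnits] at h3
    exact h3.symm
  -- projection
  have hpk : (p : k) ≠ 0 := Nat.cast_ne_zero.mpr hp.pos.ne'
  set S : Module.End k V := ∑ i ∈ Finset.range p, f ^ i with hS
  have hS1 : (f - 1) * S = 0 := by rw [hS, mul_geom_sum, hfp, sub_self]
  set π : Module.End k V := (p : k)⁻¹ • S with hπ
  set W : Submodule k V := LinearMap.ker (f - 1) with hW
  set Uu : Submodule k V := LinearMap.ker π with hU
  have hmemW : ∀ x : V, x ∈ W ↔ f x = x := by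
    intro x
    rw [hW, LinearMap.mem_ker, LinearMap.sub_apply, Module.End.one_apply, sub_eq_zero]
  have hfiW : ∀ (i : ℕ) (x : V), x ∈ W → (f ^ i) x = x := by
    intro i
    induction i with
    | zero => intro x _; simp
    | succ i ihh =>
      intro x hx
      rw [pow_succ, Module.End.mul_apply, (hmemW x).mp hx, ihh x hx]
  have hπW : ∀ x : V, π x ∈ W := by
    intro x
    have hz : (f - 1) * π = 0 := by rw [hπ, mul_smul_comm, hS1, smul_zero]
    rw [hW, LinearMap.mem_ker]
    calc (f - 1) (π x) = ((f - 1) * π) x := rfl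
      _ = 0 := by rw [hz]; rfl
  have hfixWmem : ∀ x ∈ W, π x = x := by
    intro x hx
    have hSx : S x = (p : k) • x := by
      rw [hS, LinearMap.sum_apply]
      rw [Finset.sum_congr rfl fun i _ => hfiW i x hx]
      rw [Finset.sum_const, Finset.card_range, Nat.cast_smul_eq_nsmul]
    rw [hπ, LinearMap.smul_apply, hSx, smul_smul, inv_mul_cancel₀ hpk, one_smul]
  have hproj : LinearMap.IsProj W π := ⟨hπW, hfixWmem⟩
  have hcompl : IsCompl W Uu := by rw [hU]; exact hproj.isCompl
  have hcommπ : ∀ g : G, π * ρ g = ρ g * π := by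
    intro g
    have hSg : S * ρ g = ρ g * S := by
      rw [hS, Finset.sum_mul, Finset.mul_sum]
      exact Finset.sum_congr rfl fun i _ => (Commute.pow_left (hcomm g) i)
    rw [hπ, smul_mul_assoc, hSg, mul_smul_comm]
  have hWinv : ∀ g : G, Set.MapsTo (ρ g) W W := by
    intro g x hx
    show ρ g x ∈ W
    rw [hmemW]
    calc f (ρ g x) = (f * ρ g) x := rfl
      _ = (ρ g * f) x := by rw [hcomm g]
      _ = ρ g (f x) := rfl
      _ = ρ g x := by rw [(hmemW x).mp hx]
  have hUinv : ∀ g : G, Set.MapsTo (ρ g) Uu Uu := by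
    intro g x hx
    have hπx : π x = 0 := hx
    show ρ g x ∈ Uu
    rw [hU, LinearMap.mem_ker]
    calc π (ρ g x) = (π * ρ g) x := rfl
      _ = (ρ g * π) x := by rw [hcommπ g]
      _ = ρ g (π x) := rfl
      _ = 0 := by rw [hπx, map_zero]
  -- trace identities
  have htrV : ∀ g : G, LinearMap.trace k V (ρ g) =
      LinearMap.trace k ↥W (resRep ρ W hWinv g) + LinearMap.trace k ↥Uu (resRep ρ Uu hUinv g) :=
    fun g => trace_restrict_add hcompl (ρ g) (hWinv g) (hUinv g)
  have hWrat : ∀ g : G, ∃ r : ℚ, LinearMap.trace k ↥W (resRep ρ W hWinv g) = (r : k) := by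
    intro g
    choose rr hrr using hrat
    have hres : ∀ i : ℕ, resRep ρ W hWinv (h₀ ^ i * g) = resRep ρ W hWinv g := by
      intro i
      apply LinearMap.ext
      intro x
      apply Subtype.ext
      show ρ (h₀ ^ i * g) (x : V) = ρ g (x : V)
      rw [map_mul, map_pow]
      exact hfiW i _ (hWinv g x.2)
    have hkey : ∀ i : ℕ, LinearMap.trace k V (ρ (h₀ ^ i * g)) =
        LinearMap.trace k ↥W (resRep ρ W hWinv g) +
        LinearMap.trace k ↥Uu (resRep ρ Uu hUinv (h₀ ^ i * g)) := by
      intro i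
      rw [htrV (h₀ ^ i * g), hres i]
    have hsumU : (∑ i ∈ Finset.range p, resRep ρ Uu hUinv (h₀ ^ i * g)) = 0 := by
      apply LinearMap.ext
      intro x
      apply Subtype.ext
      have hval : ((∑ i ∈ Finset.range p, resRep ρ Uu hUinv (h₀ ^ i * g)) x : V)
          = ∑ i ∈ Finset.range p, ρ (h₀ ^ i * g) (x : V) := by
        rw [LinearMap.sum_apply]
        push_cast
        rfl
      rw [hval]
      have hgx : ρ g (x : V) ∈ Uu := hUinv g x.2
      have : ∑ i ∈ Finset.range p, ρ (h₀ ^ i * g) (x : V) = S (ρ g (x : V)) := by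
        rw [hS, LinearMap.sum_apply]
        refine Finset.sum_congr rfl fun i _ => ?_
        rw [map_mul, map_pow]
        rfl
      rw [this]
      have hπ0 : π (ρ g (x : V)) = 0 := hgx
      have hSπ : S (ρ g (x : V)) = (p : k) • π (ρ g (x : V)) := by
        rw [hπ, LinearMap.smul_apply, smul_smul, mul_inv_cancel₀ hpk, one_smul]
      rw [hSπ, hπ0, smul_zero]
      rfl
    have hsum1 : ∑ i ∈ Finset.range p, LinearMap.trace k ↥Uu (resRep ρ Uu hUinv (h₀ ^ i * g)) = 0 := by
      rw [← map_sum, hsumU, map_zero]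
    have hbig : ∑ i ∈ Finset.range p, LinearMap.trace k V (ρ (h₀ ^ i * g)) =
        (p : k) * LinearMap.trace k ↥W (resRep ρ W hWinv g) := by
      rw [Finset.sum_congr rfl fun i _ => hkey i, Finset.sum_add_distrib, hsum1, add_zero,
        Finset.sum_const, Finset.card_range, nsmul_eq_mul]
    have hbig2 : ∑ i ∈ Finset.range p, LinearMap.trace k V (ρ (h₀ ^ i * g)) =
        ((∑ i ∈ Finset.range p, rr (h₀ ^ i * g) : ℚ) : k) := by
      rw [Finset.sum_congr rfl fun i _ => hrr (h₀ ^ i * g)]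
      push_cast
      rfl
    refine ⟨(∑ i ∈ Finset.range p, rr (h₀ ^ i * g)) / p, ?_⟩
    rw [hbig2] at hbig
    rw [Rat.cast_div, Rat.cast_natCast, eq_div_iff hpk]
    linear_combination -hbig
  have hUrat : ∀ g : G, ∃ r : ℚ, LinearMap.trace k ↥Uu (resRep ρ Uu hUinv g) = (r : k) := by
    intro g
    obtain ⟨r, hr⟩ := hrat g
    obtain ⟨rw_, hrw⟩ := hWrat g
    refine ⟨r - rw_, ?_⟩
    have h1 := htrV g
    rw [hr, hrw] at h1
    rw [Rat.cast_sub]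
    linear_combination -h1
  have hfixW' : ∀ w : ↥W, (∀ g : G, resRep ρ W hWinv g w = w) → w = 0 := by
    intro w hw
    apply Subtype.ext
    apply hfix
    intro g
    exact congrArg Subtype.val (hw g)
  have hfixU' : ∀ w : ↥Uu, (∀ g : G, resRep ρ Uu hUinv g w = w) → w = 0 := by
    intro w hw
    apply Subtype.ext
    apply hfix
    intro g
    exact congrArg Subtype.val (hw g)
  have hUne : Uu ≠ ⊥ := by
    intro hbot
    apply hf1
    have hWtop : W = ⊤ := by
      have hsup := hcompl.sup_eq_top
      rw [hbot, sup_bot_eq] at hsup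
      exact hsup
    apply LinearMap.ext
    intro x
    have : x ∈ W := hWtop ▸ Submodule.mem_top
    rw [(hmemW x).mp this]
    rfl
  have hdim2 : finrank k ↥W + finrank k ↥Uu = n := by
    rw [← hdim]
    exact Submodule.finrank_add_eq_of_isCompl hcompl
  haveI : Nontrivial ↥Uu := Submodule.nontrivial_iff_ne_bot.mpr hUne
  have hUpos : 0 < finrank k ↥Uu := Module.finrank_pos
  have hWlt : finrank k ↥W < n := by omega
  have hdvdW : (p - 1) ∣ finrank k ↥W :=
    ih _ hWlt G hG k ↥W (resRep ρ W hWinv) rfl hWrat hfixW'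
  -- core lemma on Uu
  set fU : Module.End k ↥Uu := resRep ρ Uu hUinv h₀ with hfU
  have hfUpow : ∀ (i : ℕ) (x : ↥Uu), ((fU ^ i) x : V) = (f ^ i) (x : V) := by
    intro i
    induction i with
    | zero => intro x; simp
    | succ i ihh =>
      intro x
      rw [pow_succ, pow_succ, Module.End.mul_apply, Module.End.mul_apply, ihh (fU x)]
      rfl
  have hfUp : fU ^ p = 1 := by
    apply LinearMap.ext
    intro x
    apply Subtype.ext
    rw [hfUpow p x, hfp]
    rfl
  have hfUker : ∀ x : ↥Uu, fU x = x → x = 0 := by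
    intro x hx
    have hxW : (x : V) ∈ W := by
      rw [hmemW]
      exact congrArg Subtype.val hx
    have hx0 : (x : V) = 0 := (Submodule.disjoint_def.mp hcompl.disjoint) _ hxW x.2
    exact Subtype.ext hx0
  obtain ⟨rU, hrU⟩ := hUrat h₀
  have hdvdU : (p - 1) ∣ finrank k ↥Uu := core_lemma p hp fU hfUp hfUker rU hrU
  rw [← hdim2]
  exact dvd_add hdvdW hdvdU


theorem stmt_9 (p : ℕ) (hp : p.Prime) (hodd : Odd p) (G : Type*) [Group G] [Finite G]
    (hG : IsPGroup p G)
    (k : Type*) [Field k] [IsAlgClosed k] [CharZero k]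
    (V : Type*) [AddCommGroup V] [Module k V] [FiniteDimensional k V]
    (hVnt : Nontrivial V) (ρ : Representation k G V)
    (hfaith : Function.Injective ρ)
    (hrat : ∀ g : G, ∃ r : ℚ, LinearMap.trace k V (ρ g) = (r : k))
    (hfix : ∀ v : V, (∀ g : G, ρ g v = v) → v = 0) :
    (p - 1) ∣ Module.finrank k V :=
  aux_lemma p hp (Module.finrank k V) G hG k V ρ rfl hrat hfix
end

section
/- Let V be a finite-dimensional vector space over an algebraically closed field of characteristic 0, with invertible operators τ and φ satisfying φ⁻¹τφ = τ^q, where τ has finite order m and gcd(q, m) = 1. If the pair (τ, φ) acts irreducibly on V (no proper nonzero subspace stable under both) then every eigenvalue of τ is a primitive m-th root of unity. -/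
theorem stmt_11 (k : Type*) [Field k] [IsAlgClosed k] [CharZero k]
    (V : Type*) [AddCommGroup V] [Module k V] [FiniteDimensional k V]
    (hVnt : Nontrivial V) (τ φ : V ≃ₗ[k] V) (m q : ℕ)
    (hm : orderOf τ = m) (hmpos : 0 < m) (hq : Nat.Coprime q m)
    (hrel : φ⁻¹ * τ * φ = τ ^ q)
    (hirr : ∀ W : Submodule k V,
      (∀ w ∈ W, τ w ∈ W) → (∀ w ∈ W, φ w ∈ W) → W = ⊥ ∨ W = ⊤) :
    ∀ μ : k, Module.End.HasEigenvalue (τ : V →ₗ[k] V) μ → IsPrimitiveRoot μ m := by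
  intro μ hμ
  obtain ⟨v, hv⟩ := hμ.exists_hasEigenvector
  have hv0 : v ≠ 0 := hv.2
  have happ : τ v = μ • v := hv.apply_eq_smul
  have hpow : ∀ n : ℕ, (τ ^ n) v = μ ^ n • v := by
    intro n
    induction n with
    | zero => simp
    | succ n ih =>
      have h1 : (τ ^ (n + 1)) v = τ ((τ ^ n) v) := by rw [pow_succ']; rfl
      rw [h1, ih, map_smul, happ, smul_smul, pow_succ, mul_comm]
  have hτm : τ ^ m = 1 := by rw [← hm]; exact pow_orderOf_eq_one τ
  have hμm : μ ^ m = 1 := by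
    have h1 : (τ ^ m) v = v := by rw [hτm]; rfl
    have h2 := hpow m
    rw [h1] at h2
    have h3 : (μ ^ m - 1) • v = 0 := by rw [sub_smul, one_smul, ← h2, sub_self]
    rcases smul_eq_zero.mp h3 with h | h
    · exact sub_eq_zero.mp h
    · exact absurd h hv0
  set d := orderOf μ with hd
  have hdm : d ∣ m := orderOf_dvd_of_pow_eq_one hμm
  have hμd : μ ^ d = 1 := pow_orderOf_eq_one μ
  -- the relation: τ * φ = φ * τ ^ q
  have hrel' : τ * φ = φ * τ ^ q := by
    rw [← hrel]; group
  have hreln : ∀ n : ℕ, τ ^ n * φ = φ * τ ^ (q * n) := by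
    intro n
    induction n with
    | zero => simp
    | succ n ih =>
      have : τ ^ (n + 1) * φ = τ ^ n * (τ * φ) := by
        rw [pow_succ']; group
      rw [this, hrel', ← mul_assoc, ih, mul_assoc, ← pow_add]
      ring_nf
  -- the submodule
  let f : V →ₗ[k] V := (τ ^ d : V ≃ₗ[k] V)
  let W : Submodule k V := LinearMap.ker (f - LinearMap.id)
  have hmemW : ∀ w, w ∈ W ↔ (τ ^ d) w = w := by
    intro w
    simp only [W, LinearMap.mem_ker, LinearMap.sub_apply, LinearMap.id_apply, sub_eq_zero]
    rfl
  have hWτ : ∀ w ∈ W, τ w ∈ W := by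
    intro w hw
    rw [hmemW] at hw ⊢
    have : (τ ^ d) (τ w) = τ ((τ ^ d) w) := by
      have hc : τ ^ d * τ = τ * τ ^ d := (Commute.pow_left rfl d)
      calc (τ ^ d) (τ w) = (τ ^ d * τ) w := rfl
        _ = (τ * τ ^ d) w := by rw [hc]
        _ = τ ((τ ^ d) w) := rfl
    rw [this, hw]
  have hWφ : ∀ w ∈ W, φ w ∈ W := by
    intro w hw
    rw [hmemW] at hw ⊢
    have h1 : (τ ^ d) (φ w) = φ ((τ ^ (q * d)) w) := by
      calc (τ ^ d) (φ w) = (τ ^ d * φ) w := rfl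
        _ = (φ * τ ^ (q * d)) w := by rw [hreln d]
        _ = φ ((τ ^ (q * d)) w) := rfl
    have hiter : ∀ n : ℕ, ((τ ^ d) ^ n) w = w := by
      intro n
      induction n with
      | zero => rfl
      | succ n ih =>
        have : ((τ ^ d) ^ (n + 1)) w = (τ ^ d) (((τ ^ d) ^ n) w) := by
          rw [pow_succ']; rfl
        rw [this, ih, hw]
    have h2 : (τ ^ (q * d)) w = w := by
      rw [mul_comm, pow_mul]; exact hiter q
    rw [h1, h2]
  have hvW : v ∈ W := by
    rw [hmemW, hpow d, hμd, one_smul]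
  have hWtop : W = ⊤ := by
    rcases hirr W hWτ hWφ with h | h
    · exfalso; apply hv0
      rw [h] at hvW
      simpa using hvW
    · exact h
  have hτd : τ ^ d = 1 := by
    apply DFunLike.ext
    intro w
    have hwW : w ∈ W := by rw [hWtop]; trivial
    rw [(hmemW w).mp hwW]; rfl
  have hmd : m ∣ d := by rw [← hm]; exact orderOf_dvd_of_pow_eq_one hτd
  have hdm' : d = m := Nat.dvd_antisymm hdm hmd
  rw [← hdm']
  exact IsPrimitiveRoot.orderOf μ
end

section
/- For every odd prime v, integer a ≥ 0, and integer q generating (ℤ/v^{a+1}ℤ)×, there exists a group G generated by two elements τ, φ with relations τ^{v^{a+1}} = 1 and φ⁻¹τφ = τ^q, together with an irreducible complex representation of G of dimension (v-1)·v^a on which the trace of every power of τ is rational. -/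
open Complex Finset

noncomputable section AuxStmt14

/-- primitive m-th root of unity -/
def zet (m : ℕ) : ℂ := Complex.exp (2 * Real.pi * Complex.I / m)

lemma zet_pow_m (m : ℕ) (hm : m ≠ 0) : zet m ^ m = 1 :=
  (Complex.isPrimitiveRoot_exp m hm).pow_eq_one

/-- the eigenvalue function -/
def lam (m : ℕ) (x : (ZMod m)ˣ) : ℂ := zet m ^ ((x : ZMod m)).val

lemma zet_ne_zero (m : ℕ) : zet m ≠ 0 := Complex.exp_ne_zero _

lemma lam_ne_zero (m : ℕ) (x : (ZMod m)ˣ) : lam m x ≠ 0 :=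
  pow_ne_zero _ (zet_ne_zero m)

lemma lam_injective (m : ℕ) [NeZero m] : Function.Injective (lam m) := by
  intro x y h
  have hm : m ≠ 0 := NeZero.ne m
  have hval : ((x : ZMod m)).val = ((y : ZMod m)).val :=
    (Complex.isPrimitiveRoot_exp m hm).pow_inj (ZMod.val_lt _) (ZMod.val_lt _) h
  have : (x : ZMod m) = (y : ZMod m) := by
    have := congrArg (Nat.cast : ℕ → ZMod m) hval
    rwa [ZMod.natCast_val, ZMod.natCast_val, ZMod.cast_id, ZMod.cast_id] at this
  exact Units.ext this

lemma zet_pow_congr (m : ℕ) [NeZero m] {a b : ℕ} (h : (a : ZMod m) = (b : ZMod m)) :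
    zet m ^ a = zet m ^ b := by
  have h1 : zet m ^ m = 1 := zet_pow_m m (NeZero.ne m)
  rw [pow_eq_pow_mod a h1, pow_eq_pow_mod b h1]
  congr 1
  exact (ZMod.natCast_eq_natCast_iff _ _ _).mp h

/-- diagonal operator -/
def Tmap (m : ℕ) : ((ZMod m)ˣ → ℂ) →ₗ[ℂ] ((ZMod m)ˣ → ℂ) where
  toFun f := fun x => lam m x * f x
  map_add' f g := by funext x; simp [mul_add]
  map_smul' c f := by funext x; simp [Pi.smul_apply, smul_eq_mul]; ring

def Tmapinv (m : ℕ) : ((ZMod m)ˣ → ℂ) →ₗ[ℂ] ((ZMod m)ˣ → ℂ) where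
  toFun f := fun x => (lam m x)⁻¹ * f x
  map_add' f g := by funext x; simp [mul_add]
  map_smul' c f := by funext x; simp [Pi.smul_apply, smul_eq_mul]; ring

def Tunit (m : ℕ) : (Module.End ℂ ((ZMod m)ˣ → ℂ))ˣ where
  val := Tmap m
  inv := Tmapinv m
  val_inv := by
    apply LinearMap.ext; intro f; funext x
    simp [Tmap, Tmapinv, Module.End.mul_apply, Module.End.one_apply]
    rw [← mul_assoc, mul_inv_cancel₀ (lam_ne_zero m x), one_mul]
  inv_val := by
    apply LinearMap.ext; intro f; funext x
    simp [Tmap, Tmapinv, Module.End.mul_apply, Module.End.one_apply]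
    rw [← mul_assoc, inv_mul_cancel₀ (lam_ne_zero m x), one_mul]

/-- translation operator -/
def Pmap (m : ℕ) (c : (ZMod m)ˣ) : ((ZMod m)ˣ → ℂ) →ₗ[ℂ] ((ZMod m)ˣ → ℂ) :=
  LinearMap.funLeft ℂ ℂ (fun x => c⁻¹ * x)

lemma Pmap_apply (m : ℕ) (c : (ZMod m)ˣ) (f : (ZMod m)ˣ → ℂ) (x : (ZMod m)ˣ) :
    Pmap m c f x = f (c⁻¹ * x) := rfl

def Punit (m : ℕ) (c : (ZMod m)ˣ) : (Module.End ℂ ((ZMod m)ˣ → ℂ))ˣ where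
  val := Pmap m c
  inv := Pmap m c⁻¹
  val_inv := by
    apply LinearMap.ext; intro f; funext x
    simp [Pmap_apply, Module.End.mul_apply, Module.End.one_apply, mul_assoc]
  inv_val := by
    apply LinearMap.ext; intro f; funext x
    simp [Pmap_apply, Module.End.mul_apply, Module.End.one_apply, mul_assoc]

lemma Tmap_pow (m : ℕ) : ∀ (n : ℕ) (f : (ZMod m)ˣ → ℂ) (x : (ZMod m)ˣ),
    (Tmap m ^ n) f x = lam m x ^ n * f x := by
  intro n
  induction n with
  | zero => intro f x; simp
  | succ k ih =>
    intro f x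
    rw [pow_succ, Module.End.mul_apply, ih]
    show lam m x ^ k * (Tmap m f x) = _
    show lam m x ^ k * (lam m x * f x) = _
    ring

lemma geom_rat (z : ℂ) (N : ℕ) (h : z ^ N = 1) :
    ∃ r : ℚ, ∑ j ∈ Finset.range N, z ^ j = (r : ℂ) := by
  by_cases h1 : z = 1
  · exact ⟨N, by simp [h1]⟩
  · exact ⟨0, by rw [geom_sum_eq h1, h]; simp⟩

lemma ramanujan_rat (m v a : ℕ) [NeZero m] (hv : v.Prime) (hm_def : m = v ^ (a + 1))
    (ω : ℂ) (hω : ω ^ m = 1) :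
    ∃ r : ℚ, ∑ x : (ZMod m)ˣ, ω ^ ((x : ZMod m)).val = (r : ℂ) := by
  classical
  have hm0 : m ≠ 0 := NeZero.ne m
  -- step 1: reindex over naturals coprime to m
  have step1 : ∑ x : (ZMod m)ˣ, ω ^ ((x : ZMod m)).val
      = ∑ j ∈ (Finset.range m).filter (fun j => Nat.Coprime j m), ω ^ j := by
    apply Finset.sum_bij (fun (x : (ZMod m)ˣ) _ => ((x : ZMod m)).val)
    · intro x _
      simp only [Finset.mem_filter, Finset.mem_range]
      exact ⟨ZMod.val_lt _, ZMod.val_coe_unit_coprime x⟩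
    · intro x _ y _ h
      apply Units.ext
      have := congrArg (Nat.cast : ℕ → ZMod m) h
      rwa [ZMod.natCast_val, ZMod.natCast_val, ZMod.cast_id, ZMod.cast_id] at this
    · intro j hj
      simp only [Finset.mem_filter, Finset.mem_range] at hj
      refine ⟨ZMod.unitOfCoprime j hj.2, Finset.mem_univ _, ?_⟩
      rw [ZMod.coe_unitOfCoprime, ZMod.val_natCast_of_lt hj.1]
    · intro x _; rfl
  -- step 2: coprime ↔ not divisible
  have step2 : (Finset.range m).filter (fun j => Nat.Coprime j m)
      = (Finset.range m).filter (fun j => ¬ (v ∣ j)) := by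
    apply Finset.filter_congr
    intro j _
    rw [hm_def, Nat.coprime_pow_right_iff (Nat.succ_pos a), Nat.coprime_comm]
    exact hv.coprime_iff_not_dvd
  -- step 3: the divisible part
  have step3 : ∑ j ∈ (Finset.range m).filter (fun j => v ∣ j), ω ^ j
      = ∑ i ∈ Finset.range (v ^ a), (ω ^ v) ^ i := by
    symm
    apply Finset.sum_bij (fun (i : ℕ) _ => v * i)
    · intro i hi
      simp only [Finset.mem_filter, Finset.mem_range] at *
      constructor
      · calc v * i < v * v ^ a := (Nat.mul_lt_mul_left hv.pos).mpr hi
          _ = m := by rw [hm_def, pow_succ']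
      · exact ⟨i, rfl⟩
    · intro i _ j _ h
      exact Nat.eq_of_mul_eq_mul_left hv.pos h
    · intro j hj
      simp only [Finset.mem_filter, Finset.mem_range] at hj
      obtain ⟨hjm, i, rfl⟩ := hj
      refine ⟨i, ?_, rfl⟩
      simp only [Finset.mem_range]
      rw [hm_def, pow_succ'] at hjm
      exact Nat.lt_of_mul_lt_mul_left hjm
    · intro i _
      rw [← pow_mul]
  -- combine
  have split : ∑ j ∈ (Finset.range m).filter (fun j => ¬ (v ∣ j)), ω ^ j
      = (∑ j ∈ Finset.range m, ω ^ j) - ∑ j ∈ (Finset.range m).filter (fun j => v ∣ j), ω ^ j := by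
    rw [eq_sub_iff_add_eq, add_comm]
    exact Finset.sum_filter_add_sum_filter_not _ _ _
  obtain ⟨rA, hrA⟩ := geom_rat ω m hω
  have hωv : (ω ^ v) ^ (v ^ a) = 1 := by
    rw [← pow_mul, ← pow_succ', ← hm_def]
    exact hω
  obtain ⟨rB, hrB⟩ := geom_rat (ω ^ v) (v ^ a) hωv
  refine ⟨rA - rB, ?_⟩
  rw [step1, step2, split, step3, hrA, hrB]
  push_cast
  ring

end AuxStmt14

theorem stmt_14 (v : ℕ) (hv : v.Prime) (hvodd : Odd v) (a : ℕ) (q : ℕ)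
    (hq : Nat.Coprime q (v ^ (a + 1)))
    (hgen : ∀ u : (ZMod (v ^ (a + 1)))ˣ, u ∈ Subgroup.zpowers (ZMod.unitOfCoprime q hq)) :
    ∃ (G : Type) (_ : Group G) (τ φ : G),
      τ ^ (v ^ (a + 1)) = 1 ∧ φ⁻¹ * τ * φ = τ ^ q ∧
      Subgroup.closure {τ, φ} = ⊤ ∧
      ∃ (V : Type) (_ : AddCommGroup V) (_ : Module ℂ V),
        ∃ (_ : FiniteDimensional ℂ V) (ρ : Representation ℂ G V),
          Module.finrank ℂ V = (v - 1) * v ^ a ∧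
          (∀ W : Submodule ℂ V, (∀ g : G, ∀ w ∈ W, ρ g w ∈ W) → W = ⊥ ∨ W = ⊤) ∧
          (∀ n : ℕ, ∃ r : ℚ, LinearMap.trace ℂ V (ρ (τ ^ n)) = (r : ℂ)) := by
  classical
  set m := v ^ (a + 1) with hm_def
  have hm0 : m ≠ 0 := pow_ne_zero _ hv.ne_zero
  haveI : NeZero m := ⟨hm0⟩
  set u : (ZMod m)ˣ := ZMod.unitOfCoprime q hq with hu_def
  set τ₀ := Tunit m with hτ₀
  set φ₀ := Punit m u with hφ₀
  set GG := Subgroup.closure ({τ₀, φ₀} : Set (Module.End ℂ ((ZMod m)ˣ → ℂ))ˣ) with hGG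
  have hτmem : τ₀ ∈ GG := Subgroup.subset_closure (by left; rfl)
  have hφmem : φ₀ ∈ GG := Subgroup.subset_closure (by right; rfl)
  refine ⟨GG, inferInstance, ⟨τ₀, hτmem⟩, ⟨φ₀, hφmem⟩, ?_, ?_, ?_, ?_⟩
  · -- τ ^ m = 1
    apply Subtype.ext
    push_cast
    apply Units.ext
    rw [Units.val_pow_eq_pow_val]
    apply LinearMap.ext; intro f; funext x
    show (Tmap m ^ m) f x = f x
    rw [Tmap_pow]
    unfold lam
    rw [← pow_mul, mul_comm ((x : ZMod m)).val m, pow_mul, zet_pow_m m hm0, one_pow, one_mul]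
  · -- relation
    apply Subtype.ext
    push_cast
    apply Units.ext
    rw [Units.val_pow_eq_pow_val]
    show (Punit m u)⁻¹.val * (Tmap m) * (Pmap m u) = Tmap m ^ q
    have hinv : (Punit m u)⁻¹.val = Pmap m u⁻¹ := rfl
    rw [hinv]
    apply LinearMap.ext; intro f; funext x
    rw [Module.End.mul_apply, Module.End.mul_apply, Pmap_apply, Tmap_pow]
    show lam m (u⁻¹⁻¹ * x) * (Pmap m u f) (u⁻¹⁻¹ * x) = lam m x ^ q * f x
    rw [inv_inv, Pmap_apply, inv_mul_cancel_left]
    congr 1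
    unfold lam
    rw [← pow_mul]
    apply zet_pow_congr
    push_cast [ZMod.natCast_val, ZMod.cast_id]
    rw [← ZMod.coe_unitOfCoprime q hq, ← hu_def]
    push_cast
    rw [mul_comm]
  · -- closure
    have : ((↑) : GG → (Module.End ℂ ((ZMod m)ˣ → ℂ))ˣ) ⁻¹' {τ₀, φ₀}
        = {(⟨τ₀, hτmem⟩ : GG), ⟨φ₀, hφmem⟩} := by
      ext g
      simp only [Set.mem_preimage, Set.mem_insert_iff, Set.mem_singleton_iff]
      constructor
      · rintro (h | h)
        · left; exact Subtype.ext h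
        · right; exact Subtype.ext h
      · rintro (rfl | rfl)
        · left; rfl
        · right; rfl
    rw [← this]
    exact Subgroup.closure_closure_coe_preimage
  · -- representation
    refine ⟨(ZMod m)ˣ → ℂ, inferInstance, inferInstance, inferInstance,
      (Units.coeHom _).comp GG.subtype, ?_, ?_, ?_⟩
    · -- dimension
      rw [Module.finrank_fintype_fun_eq_card, ZMod.card_units_eq_totient, hm_def,
        Nat.totient_prime_pow hv (Nat.succ_pos a)]
      rw [Nat.succ_sub_one, Nat.mul_comm]
    · -- irreducibility
      intro W hW
      by_cases hbot : W = ⊥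
      · left; exact hbot
      right
      obtain ⟨w, hwW, hw0⟩ := Submodule.exists_mem_ne_zero_of_ne_bot hbot
      obtain ⟨x0, hx0⟩ : ∃ x0, w x0 ≠ 0 := by
        by_contra h; push_neg at h; exact hw0 (funext h)
      have hT : ∀ f ∈ W, Tmap m f ∈ W := fun f hf => hW ⟨τ₀, hτmem⟩ f hf
      have hP : ∀ f ∈ W, Pmap m u f ∈ W := fun f hf => hW ⟨φ₀, hφmem⟩ f hf
      -- interpolation
      have key : ∀ s : Finset (ZMod m)ˣ,
          ∃ w' ∈ W, w' x0 = w x0 ∧ ∀ y ∈ s, y ≠ x0 → w' y = 0 := by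
        intro s
        induction s using Finset.induction_on with
        | empty => exact ⟨w, hwW, rfl, by simp⟩
        | @insert b s hbs ih =>
          obtain ⟨w', hw'W, hw'x0, hw's⟩ := ih
          by_cases hbx : b = x0
          · refine ⟨w', hw'W, hw'x0, ?_⟩
            intro y hy hyx
            rcases Finset.mem_insert.mp hy with h | h
            · exact absurd (h.trans hbx) hyx
            · exact hw's y h hyx
          · have hc : lam m x0 - lam m b ≠ 0 := by
              refine sub_ne_zero.mpr (fun h => hbx ?_)
              exact (lam_injective m h.symm)
            refine ⟨(lam m x0 - lam m b)⁻¹ • (Tmap m w' - lam m b • w'), ?_, ?_, ?_⟩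
            · exact W.smul_mem _ (W.sub_mem (hT w' hw'W) (W.smul_mem _ hw'W))
            · show (lam m x0 - lam m b)⁻¹ * (Tmap m w' x0 - lam m b * w' x0) = w x0
              show (lam m x0 - lam m b)⁻¹ * (lam m x0 * w' x0 - lam m b * w' x0) = w x0
              rw [← sub_mul, inv_mul_cancel_left₀ hc, hw'x0]
            · intro y hy hyx
              show (lam m x0 - lam m b)⁻¹ * (Tmap m w' y - lam m b * w' y) = 0
              show (lam m x0 - lam m b)⁻¹ * (lam m y * w' y - lam m b * w' y) = 0
              rcases Finset.mem_insert.mp hy with h | h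
              · subst h; ring
              · rw [hw's y h hyx]; ring
      obtain ⟨w', hw'W, hw'x0, hw'⟩ := key Finset.univ
      have hsingle : Pi.single x0 (1 : ℂ) ∈ W := by
        have heq : (w x0)⁻¹ • w' = Pi.single x0 (1 : ℂ) := by
          funext y
          by_cases hy : y = x0
          · subst hy
            show (w y)⁻¹ * w' y = _
            rw [hw'x0, inv_mul_cancel₀ hx0, Pi.single_eq_same]
          · show (w x0)⁻¹ * w' y = _
            rw [hw' y (Finset.mem_univ y) hy, mul_zero, Pi.single_eq_of_ne hy]
        exact heq ▸ W.smul_mem _ hw'W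
      have hstep : ∀ y : (ZMod m)ˣ, Pi.single y (1 : ℂ) ∈ W →
          Pi.single (u * y) (1 : ℂ) ∈ W := by
        intro y hy
        have := hP _ hy
        have heq : Pmap m u (Pi.single y (1 : ℂ)) = Pi.single (u * y) (1 : ℂ) := by
          funext z
          rw [Pmap_apply]
          rw [Pi.single_apply, Pi.single_apply]
          congr 1
          simp only [eq_iff_iff]
          constructor
          · intro h; rw [← h, mul_inv_cancel_left]
          · intro h; rw [h, inv_mul_cancel_left]
        rwa [heq] at this
      have hpows : ∀ k : ℕ, Pi.single (u ^ k * x0) (1 : ℂ) ∈ W := by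
        intro k
        induction k with
        | zero => simpa using hsingle
        | succ k ih =>
          have := hstep _ ih
          rwa [← mul_assoc, ← pow_succ'] at this
      have hall : ∀ x : (ZMod m)ˣ, Pi.single x (1 : ℂ) ∈ W := by
        intro x
        obtain ⟨k, hk⟩ := mem_powers_iff_mem_zpowers.mpr (hgen (x * x0⁻¹))
        have hx : u ^ k * x0 = x := by
          rw [show u ^ k = x * x0⁻¹ from hk, inv_mul_cancel_right]
        exact hx ▸ hpows k
      rw [Submodule.eq_top_iff']
      intro f
      have hf : f = ∑ x : (ZMod m)ˣ, f x • (Pi.single x (1 : ℂ) : (ZMod m)ˣ → ℂ) := by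
        funext y
        rw [Finset.sum_apply]
        rw [Finset.sum_eq_single y]
        · simp
        · intro x _ hxy
          simp [Pi.single_eq_of_ne (Ne.symm hxy)]
        · intro h; exact absurd (Finset.mem_univ y) h
      rw [hf]
      exact Submodule.sum_mem _ (fun x _ => W.smul_mem _ (hall x))
    · -- trace rationality
      intro n
      have hρ : ((Units.coeHom (Module.End ℂ ((ZMod m)ˣ → ℂ))).comp GG.subtype)
          ((⟨τ₀, hτmem⟩ : GG) ^ n) = Tmap m ^ n := by
        rfl
      rw [hρ]
      have htr : LinearMap.trace ℂ ((ZMod m)ˣ → ℂ) (Tmap m ^ n)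
          = ∑ x : (ZMod m)ˣ, (zet m ^ n) ^ ((x : ZMod m)).val := by
        rw [LinearMap.trace_eq_matrix_trace ℂ (Pi.basisFun ℂ ((ZMod m)ˣ))]
        rw [Matrix.trace]
        apply Finset.sum_congr rfl
        intro x _
        rw [Matrix.diag_apply, LinearMap.toMatrix_apply, Pi.basisFun_repr,
          Pi.basisFun_apply]
        rw [Tmap_pow]
        simp only [Pi.single_eq_same, mul_one]
        unfold lam
        rw [← pow_mul, mul_comm, pow_mul]
      rw [htr]
      exact ramanujan_rat m v a hv hm_def (zet m ^ n)
        (by rw [← pow_mul, mul_comm, pow_mul, zet_pow_m m hm0, one_pow])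
end
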